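/- Let ℓ : ℝ^d → ℝ be differentiable, μ-strongly convex, and L_ℓ-smooth, and use the linear parameterization ϕ(x) = x (with s restricted to positive entries). Then the energy f(λ) = E[ℓ(T_λ(u))] is μ-strongly convex on Λ with respect to the parameter norm ‖λ‖² = ‖m‖₂² + ‖s‖₂² + ‖L‖_F². -/

import Mathlib

/-!
With `g := ℓ - (μ/2)‖·‖²` (convex by hypothesis), the strong-convexity defect of the energy is
`E[ℓ(T_λ u)] - (μ/2)‖λ‖² = E[g(T_λ u)]`: for coordinates with mean zero and
`E[u_i u_j] = δ_ij` one has `E‖T_λ u‖² = ‖m‖² + ‖C‖_F²`, and since `diag(s)` and `L` have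
disjoint supports, `‖C‖_F² = ‖s‖² + ‖L‖_F²`, so `E‖T_λ u‖² = ‖λ‖²`. Under `ϕ = id` the map
`λ ↦ T_λ u` is linear, so each `g(T_λ u)` is convex in `λ`, and so is its expectation.
-/

open MeasureTheory ProbabilityTheory

noncomputable section

abbrev Euc (d : ℕ) := EuclideanSpace ℝ (Fin d)

/-- Indices of the strictly lower-triangular entries of a `d × d` matrix. -/
abbrev LowIdx (d : ℕ) := {p : Fin d × Fin d // p.2 < p.1}

/-- Index set for the parameters `λ = (m, s, L)` of the full-rank Cholesky family. -/
abbrev ParamIdx (d : ℕ) := (Fin d) ⊕ ((Fin d) ⊕ (LowIdx d))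

/-- The parameter space `Λ`, with `‖λ‖² = ‖m‖₂² + ‖s‖₂² + ‖L‖_F²`. -/
abbrev Param (d : ℕ) := EuclideanSpace ℝ (ParamIdx d)

def mOf {d : ℕ} (lam : Param d) (i : Fin d) : ℝ := lam (Sum.inl i)
def sOf {d : ℕ} (lam : Param d) (i : Fin d) : ℝ := lam (Sum.inr (Sum.inl i))
def LOf {d : ℕ} (lam : Param d) (i j : Fin d) : ℝ :=
  if h : j < i then lam (Sum.inr (Sum.inr ⟨(i, j), h⟩)) else 0

/-- The location-scale reparameterization `T_λ(u) = (diag(ϕ(s)) + L) u + m`. -/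
def Tmap {d : ℕ} (ϕ : ℝ → ℝ) (lam : Param d) (u : Fin d → ℝ) : Euc d :=
  WithLp.toLp 2 (fun i => mOf lam i + ϕ (sOf lam i) * u i + ∑ j, LOf lam i j * u j)

theorem ConvexOn.integral {E Ω : Type*} [AddCommGroup E] [Module ℝ E] [MeasurableSpace Ω]
    {μ : Measure Ω} {s : Set E} {f : Ω → E → ℝ} (hs : Convex ℝ s)
    (hf : ∀ ω, ConvexOn ℝ s (f ω)) (hint : ∀ x ∈ s, Integrable (fun ω => f ω x) μ) :
    ConvexOn ℝ s fun x => ∫ ω, f ω x ∂μ := by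
  refine ⟨hs, fun x hx y hy a b ha hb hab => ?_⟩
  calc ∫ ω, f ω (a • x + b • y) ∂μ
      ≤ ∫ ω, (a * f ω x + b * f ω y) ∂μ :=
        integral_mono (hint _ (hs hx hy ha hb hab))
          (((hint x hx).const_mul a).add ((hint y hy).const_mul b))
          fun ω => (hf ω).2 hx hy ha hb hab
    _ = a * ∫ ω, f ω x ∂μ + b * ∫ ω, f ω y ∂μ := by
        rw [integral_add ((hint x hx).const_mul a) ((hint y hy).const_mul b),
          integral_const_mul, integral_const_mul]

section Orthonormal

variable {ι Ω : Type*} [MeasurableSpace Ω] {μ : Measure Ω} {X : ι → Ω → ℝ}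

theorem iIndepFun.integral_mul_eq_ite [IsProbabilityMeasure μ] [DecidableEq ι]
    (hindep : iIndepFun X μ) (hint : ∀ i, Integrable (X i) μ) (hmean : ∀ i, ∫ ω, X i ω ∂μ = 0)
    (hvar : ∀ i, ∫ ω, X i ω ^ 2 ∂μ = 1) (i j : ι) :
    ∫ ω, X i ω * X j ω ∂μ = if i = j then 1 else 0 := by
  rcases eq_or_ne i j with rfl | hij
  · simpa [sq] using hvar i
  · have := (hindep.indepFun hij).integral_mul_eq_mul_integral
      (hint i).aestronglyMeasurable (hint j).aestronglyMeasurable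
    simpa [hmean, hij] using this

variable [Fintype ι]

theorem memLp_const_add_sum_mul [IsFiniteMeasure μ] (hX : ∀ i, MemLp (X i) 2 μ) (a : ℝ)
    (c : ι → ℝ) : MemLp (fun ω => a + ∑ j, c j * X j ω) 2 μ :=
  (memLp_const a).add (memLp_finsetSum _ fun j _ => (hX j).const_mul (c j))

variable [DecidableEq ι]

theorem integral_sq_sum_mul_of_orthonormal (hX : ∀ i, MemLp (X i) 2 μ)
    (horth : ∀ i j, ∫ ω, X i ω * X j ω ∂μ = if i = j then 1 else 0) (c : ι → ℝ) :
    ∫ ω, (∑ j, c j * X j ω) ^ 2 ∂μ = ∑ j, c j ^ 2 := by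
  have hprod : ∀ j k, Integrable (fun ω => c j * c k * (X j ω * X k ω)) μ :=
    fun j k => ((hX j).integrable_mul (hX k)).const_mul _
  have hexpand : ∀ ω, (∑ j, c j * X j ω) ^ 2 = ∑ j, ∑ k, c j * c k * (X j ω * X k ω) :=
    fun ω => by simp_rw [sq, Finset.sum_mul_sum, mul_mul_mul_comm]
  simp_rw [hexpand]
  rw [integral_finsetSum _ fun j _ => integrable_finsetSum _ fun k _ => hprod j k]
  simp_rw [integral_finsetSum _ fun k _ => hprod _ k, integral_const_mul, horth]
  simp [sq]

theorem integral_sq_const_add_sum_mul_of_orthonormal [IsProbabilityMeasure μ]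
    (hX : ∀ i, MemLp (X i) 2 μ) (hmean : ∀ i, ∫ ω, X i ω ∂μ = 0)
    (horth : ∀ i j, ∫ ω, X i ω * X j ω ∂μ = if i = j then 1 else 0) (a : ℝ) (c : ι → ℝ) :
    ∫ ω, (a + ∑ j, c j * X j ω) ^ 2 ∂μ = a ^ 2 + ∑ j, c j ^ 2 := by
  set S := fun ω => ∑ j, c j * X j ω
  have hS : MemLp S 2 μ := memLp_finsetSum _ fun j _ => (hX j).const_mul (c j)
  have hS_int : Integrable S μ := hS.integrable one_le_two
  have hS_mean : ∫ ω, S ω ∂μ = 0 := by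
    simp [S, integral_finsetSum _ fun j _ => ((hX j).integrable one_le_two).const_mul (c j),
      integral_const_mul, hmean]
  calc ∫ ω, (a + S ω) ^ 2 ∂μ = ∫ ω, (a ^ 2 + 2 * a * S ω + S ω ^ 2) ∂μ := by
        congr with ω; ring
    _ = a ^ 2 + ∑ j, c j ^ 2 := by
        rw [integral_add (f := fun ω => a ^ 2 + 2 * a * S ω)
            ((integrable_const _).add (hS_int.const_mul _)) hS.integrable_sq,
          integral_add (integrable_const _) (hS_int.const_mul _), integral_const_mul, hS_mean,
          integral_sq_sum_mul_of_orthonormal hX horth]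
        simp

end Orthonormal

section Cholesky

variable {d : ℕ}

def scaleMatrix (lam : Param d) : Matrix (Fin d) (Fin d) ℝ :=
  Matrix.diagonal (sOf lam) + Matrix.of (LOf lam)

theorem Tmap_id_apply (lam : Param d) (v : Fin d → ℝ) (i : Fin d) :
    Tmap (fun x => x) lam v i = mOf lam i + ∑ j, scaleMatrix lam i j * v j := by
  simp [Tmap, scaleMatrix, Matrix.diagonal_apply, add_mul, Finset.sum_add_distrib, add_assoc]

theorem sum_sq_scaleMatrix_row (lam : Param d) (i : Fin d) :
    ∑ j, scaleMatrix lam i j ^ 2 = sOf lam i ^ 2 + ∑ j, LOf lam i j ^ 2 := by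
  have hsplit : ∀ j,
      scaleMatrix lam i j ^ 2 = (if i = j then sOf lam i ^ 2 else 0) + LOf lam i j ^ 2 := by
    intro j
    rcases eq_or_ne i j with rfl | hij
    · simp [scaleMatrix, LOf]
    · simp [scaleMatrix, hij]
  simp [hsplit, Finset.sum_add_distrib]

theorem sum_sum_sq_LOf (lam : Param d) :
    ∑ i, ∑ j, LOf lam i j ^ 2 = ∑ q : LowIdx d, lam (Sum.inr (Sum.inr q)) ^ 2 := by
  rw [← Fintype.sum_prod_type',
    ← Fintype.sum_subtype_add_sum_subtype (fun p : Fin d × Fin d => p.2 < p.1)]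
  have hlow : ∀ q : LowIdx d, LOf lam q.1.1 q.1.2 = lam (Sum.inr (Sum.inr q)) :=
    fun q => dif_pos q.2
  have hupp : ∀ q : {p : Fin d × Fin d // ¬p.2 < p.1}, LOf lam q.1.1 q.1.2 = 0 :=
    fun q => dif_neg q.2
  simp [hlow, hupp]

theorem norm_sq_param (lam : Param d) :
    ‖lam‖ ^ 2 = ∑ i, (mOf lam i ^ 2 + ∑ j, scaleMatrix lam i j ^ 2) := by
  simp_rw [EuclideanSpace.norm_sq_eq, Real.norm_eq_abs, sq_abs, Fintype.sum_sum_type,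
    sum_sq_scaleMatrix_row, Finset.sum_add_distrib, sum_sum_sq_LOf, mOf, sOf]

theorem LOf_add (x y : Param d) (i j : Fin d) : LOf (x + y) i j = LOf x i j + LOf y i j := by
  unfold LOf; split_ifs <;> simp

theorem LOf_smul (c : ℝ) (x : Param d) (i j : Fin d) : LOf (c • x) i j = c * LOf x i j := by
  unfold LOf; split_ifs <;> simp

theorem convex_setOf_sOf_pos : Convex ℝ {lam : Param d | ∀ i, 0 < sOf lam i} := by
  simp_rw [Set.ofPred_forall]
  exact convex_iInter fun i => convex_halfSpace_gt ⟨fun x y => rfl, fun c x => rfl⟩ 0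

def TmapLinear (v : Fin d → ℝ) : Param d →ₗ[ℝ] Euc d where
  toFun lam := Tmap (fun x => x) lam v
  map_add' x y := by
    ext i
    simp only [Tmap, mOf, sOf, LOf_add, PiLp.add_apply, add_mul, Finset.sum_add_distrib]
    ring
  map_smul' c x := by
    ext i
    simp only [Tmap, mOf, sOf, LOf_smul, PiLp.smul_apply, mul_assoc, ← Finset.mul_sum]
    simp only [smul_eq_mul, Real.ringHom_apply]
    ring

end Cholesky

section Moments

variable {d : ℕ} {Ω : Type*} [MeasurableSpace Ω] {μ : Measure Ω} [IsProbabilityMeasure μ]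
  {u : Ω → Fin d → ℝ}

theorem norm_sq_Tmap_id (lam : Param d) (v : Fin d → ℝ) :
    ‖Tmap (fun x => x) lam v‖ ^ 2 = ∑ i, (mOf lam i + ∑ j, scaleMatrix lam i j * v j) ^ 2 := by
  simp_rw [EuclideanSpace.norm_sq_eq, Real.norm_eq_abs, sq_abs, Tmap_id_apply]

theorem integrable_norm_sq_Tmap (hu : ∀ i, MemLp (fun ω => u ω i) 2 μ) (lam : Param d) :
    Integrable (fun ω => ‖Tmap (fun x => x) lam (u ω)‖ ^ 2) μ := by
  simp_rw [norm_sq_Tmap_id]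
  exact integrable_finsetSum _ fun i _ =>
    (memLp_const_add_sum_mul (X := fun j ω => u ω j) hu _ _).integrable_sq

theorem integral_norm_sq_Tmap (hu : ∀ i, MemLp (fun ω => u ω i) 2 μ)
    (hmean : ∀ i, ∫ ω, u ω i ∂μ = 0)
    (horth : ∀ i j, ∫ ω, u ω i * u ω j ∂μ = if i = j then 1 else 0) (lam : Param d) :
    ∫ ω, ‖Tmap (fun x => x) lam (u ω)‖ ^ 2 ∂μ = ‖lam‖ ^ 2 := by
  simp_rw [norm_sq_Tmap_id]
  rw [integral_finsetSum _ fun i _ => ?_, norm_sq_param]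
  · simp_rw [integral_sq_const_add_sum_mul_of_orthonormal (X := fun j ω => u ω j) hu hmean horth]
  · exact (memLp_const_add_sum_mul (X := fun j ω => u ω j) hu _ _).integrable_sq

end Moments

theorem energy_strongly_convex_linear_general
    {d : ℕ} {Ω : Type*} [MeasurableSpace Ω] (μP : Measure Ω) [IsProbabilityMeasure μP]
    (u : Ω → Fin d → ℝ)
    (hindep : iIndepFun (fun i ω => u ω i) μP)
    (hmean : ∀ i, ∫ ω, u ω i ∂μP = 0)
    (hvar : ∀ i, ∫ ω, (u ω i) ^ 2 ∂μP = 1)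
    (hintpow : ∀ (i : Fin d), ∀ k ≤ 4, Integrable (fun ω => (u ω i) ^ k) μP)
    (ℓ : Euc d → ℝ) (μ : ℝ)
    (hsc : ConvexOn ℝ Set.univ (fun z => ℓ z - μ / 2 * ‖z‖ ^ 2))
    (hfint : ∀ lam : Param d, Integrable (fun ω => ℓ (Tmap (fun x => x) lam (u ω))) μP) :
    ConvexOn ℝ {lam : Param d | ∀ i, 0 < sOf lam i}
      (fun lam => (∫ ω, ℓ (Tmap (fun x => x) lam (u ω)) ∂μP) - μ / 2 * ‖lam‖ ^ 2) := by
  have hu : ∀ i, MemLp (fun ω => u ω i) 2 μP := fun i =>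
    (memLp_two_iff_integrable_sq (by simpa using hintpow i 1 (by norm_num) :
      Integrable (fun ω => u ω i) μP).aestronglyMeasurable).2 (hintpow i 2 (by norm_num))
  have horth :=
    iIndepFun.integral_mul_eq_ite hindep (fun i => (hu i).integrable one_le_two) hmean hvar
  set g : Euc d → ℝ := fun z => ℓ z - μ / 2 * ‖z‖ ^ 2
  have hg_int : ∀ lam, Integrable (fun ω => g (TmapLinear (u ω) lam)) μP := fun lam =>
    (hfint lam).sub ((integrable_norm_sq_Tmap hu lam).const_mul _)
  have henergy : ∀ lam, (∫ ω, ℓ (Tmap (fun x => x) lam (u ω)) ∂μP) - μ / 2 * ‖lam‖ ^ 2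
      = ∫ ω, g (TmapLinear (u ω) lam) ∂μP := fun lam => by
    rw [← integral_norm_sq_Tmap hu hmean horth lam, ← integral_const_mul,
      ← integral_sub (hfint lam) ((integrable_norm_sq_Tmap hu lam).const_mul _)]
    rfl
  simp_rw [henergy]
  exact (ConvexOn.integral convex_univ (fun ω => hsc.comp_linearMap (TmapLinear (u ω)))
    fun lam _ => hg_int lam).subset (Set.subset_univ _) convex_setOf_sOf_pos

/-- If `ℓ` is differentiable, `μ·`-strongly convex and `L_ℓ`-smooth,
then under the linear parameterization `ϕ(x) = x` (with `s` restricted to positive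
entries) the energy `f(λ) = E[ℓ(T_λ(u))]` is `μ·`-strongly convex on `Λ` with respect
to the parameter norm: subtracting `(μ/2)‖·‖²` from it leaves a function convex on
`Λ = {λ | s > 0}`. -/
theorem energy_strongly_convex_linear
    {d : ℕ} {Ω : Type*} [MeasurableSpace Ω] (μP : Measure Ω) [IsProbabilityMeasure μP]
    (u : Ω → Fin d → ℝ)
    (hmeas : ∀ i, Measurable fun ω => u ω i)
    (hindep : iIndepFun (fun i ω => u ω i) μP)
    (hident : ∀ i j, IdentDistrib (fun ω => u ω i) (fun ω => u ω j) μP μP)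
    (hmean : ∀ i, ∫ ω, u ω i ∂μP = 0)
    (hvar : ∀ i, ∫ ω, (u ω i) ^ 2 ∂μP = 1)
    (hmom3 : ∀ i, ∫ ω, (u ω i) ^ 3 ∂μP = 0)
    (kφ : ℝ) (hmom4 : ∀ i, ∫ ω, (u ω i) ^ 4 ∂μP = kφ)
    (hintpow : ∀ (i : Fin d), ∀ k ≤ 4, Integrable (fun ω => (u ω i) ^ k) μP)
    (ℓ : Euc d → ℝ) (μ Lℓ : ℝ) (hμ : 0 < μ)
    (hdiff : Differentiable ℝ ℓ)
    (hsc : ConvexOn ℝ Set.univ (fun z => ℓ z - μ / 2 * ‖z‖ ^ 2))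
    (hsmooth : ∀ z z', ‖gradient ℓ z - gradient ℓ z'‖ ≤ Lℓ * ‖z - z'‖)
    (hfint : ∀ lam : Param d, Integrable (fun ω => ℓ (Tmap (fun x => x) lam (u ω))) μP) :
    ConvexOn ℝ {lam : Param d | ∀ i, 0 < sOf lam i}
      (fun lam => (∫ ω, ℓ (Tmap (fun x => x) lam (u ω)) ∂μP) - μ / 2 * ‖lam‖ ^ 2) :=
  energy_strongly_convex_linear_general μP u hindep hmean hvar hintpow ℓ μ hsc hfint

end
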